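/- Let P and Ψ be n×n real symmetric matrices with Ψ positive semidefinite and P − Ψ positive semidefinite. Define f(γ) = det(P − γΨ) for γ ∈ [0,1]. Then f is monotonically nonincreasing: for all 0 ≤ γ₁ ≤ γ₂ ≤ 1, f(γ₁) ≥ f(γ₂). -/

import Mathlib

/-!
Both `P - γ₂ • Ψ = (P - Ψ) + (1 - γ₂) • Ψ` and the increment `(γ₂ - γ₁) • Ψ` are positive
semidefinite, so it suffices that the determinant is monotone on positive semidefinite matrices:
`det A ≤ det (A + B)`. If `A` is singular this is `0 ≤ det (A + B)`. Otherwise `A = X⋆ X` with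
`X` invertible, so `A + B = X⋆ (1 + C) X` with `C = X⁻¹⋆ B X⁻¹ ⪰ 0`, and
`det (1 + C) = ∏ (1 + λᵢ) ≥ 1` over the eigenvalues `λᵢ ≥ 0` of `C`.
-/

open scoped ComplexOrder MatrixOrder

namespace Matrix

variable {n 𝕜 : Type*} [Fintype n] [DecidableEq n] [RCLike 𝕜]

theorem det_conjStarAlgAut (U : unitary (Matrix n n 𝕜)) (M : Matrix n n 𝕜) :
    (Unitary.conjStarAlgAut 𝕜 _ U M).det = M.det := by
  rw [Unitary.conjStarAlgAut_apply, det_mul_right_comm, Unitary.mul_star_self_of_mem U.2, one_mul]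

theorem IsHermitian.det_one_add {A : Matrix n n 𝕜} (hA : A.IsHermitian) :
    (1 + A).det = ((∏ i, (1 + hA.eigenvalues i) : ℝ) : 𝕜) := by
  conv_lhs => rw [hA.spectral_theorem, ← map_one (Unitary.conjStarAlgAut 𝕜 _ hA.eigenvectorUnitary),
    ← map_add, det_conjStarAlgAut, ← diagonal_one, diagonal_add, det_diagonal]
  simp

theorem PosSemidef.one_le_det_one_add {C : Matrix n n 𝕜} (hC : C.PosSemidef) :
    1 ≤ (1 + C).det := by
  rw [hC.isHermitian.det_one_add, ← RCLike.ofReal_one, RCLike.ofReal_le_ofReal]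
  exact Finset.one_le_prod fun i _ => le_add_of_nonneg_right (hC.eigenvalues_nonneg i)

theorem PosSemidef.det_le_det_add {A B : Matrix n n 𝕜} (hA : A.PosSemidef) (hB : B.PosSemidef) :
    A.det ≤ (A + B).det := by
  by_cases hA0 : A.det = 0
  · exact hA0 ▸ (hA.add hB).det_nonneg
  obtain ⟨X, hX, rfl⟩ := CStarAlgebra.isStrictlyPositive_iff_eq_star_mul_self.mp
    (hA.posDef_iff_det_ne_zero.mpr hA0).isStrictlyPositive
  have hXdet : IsUnit X.det := (isUnit_iff_isUnit_det X).mp hX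
  have hC : (X⁻¹ᴴ * B * X⁻¹).PosSemidef := hB.conjTranspose_mul_mul_same _
  have hAB : star X * X + B = star X * (1 + X⁻¹ᴴ * B * X⁻¹) * X := by
    have hXX : star X * X⁻¹ᴴ = 1 := by
      rw [star_eq_conjTranspose, ← conjTranspose_mul, nonsing_inv_mul _ hXdet, conjTranspose_one]
    rw [mul_add, add_mul, mul_one]
    simp only [← mul_assoc, hXX, one_mul]
    rw [mul_assoc, nonsing_inv_mul _ hXdet, mul_one]
  rw [hAB, det_mul_right_comm, det_mul (star X * X)]
  exact le_mul_of_one_le_right hA.det_nonneg hC.one_le_det_one_add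

end Matrix

theorem det_sub_smul_antitone_general {n : ℕ} (P Ψ : Matrix (Fin n) (Fin n) ℝ)
    (hΨ : Ψ.PosSemidef) (hPΨ : (P - Ψ).PosSemidef)
    (f : ℝ → ℝ) (hf : ∀ γ, f γ = (P - γ • Ψ).det) :
    ∀ γ₁ γ₂ : ℝ, 0 ≤ γ₁ → γ₁ ≤ γ₂ → γ₂ ≤ 1 → f γ₂ ≤ f γ₁ := by
  intro γ₁ γ₂ _ h₁₂ h₂
  have hγ₂ : (P - γ₂ • Ψ).PosSemidef := by
    rw [show P - γ₂ • Ψ = (P - Ψ) + (1 - γ₂) • Ψ by module]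
    exact hPΨ.add (hΨ.smul (sub_nonneg.mpr h₂))
  rw [hf, hf, show P - γ₁ • Ψ = (P - γ₂ • Ψ) + (γ₂ - γ₁) • Ψ by module]
  exact hγ₂.det_le_det_add (hΨ.smul (sub_nonneg.mpr h₁₂))

/-- Proposition 1: monotonic decrease of `det (P - γ • Ψ)` in `γ ∈ [0,1]`,
given `Ψ ⪰ 0` and `P - Ψ ⪰ 0` with `P` symmetric. -/
theorem det_sub_smul_antitone {n : ℕ} (P Ψ : Matrix (Fin n) (Fin n) ℝ)
    (hP : P.IsHermitian) (hΨ : Ψ.PosSemidef) (hPΨ : (P - Ψ).PosSemidef)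
    (f : ℝ → ℝ) (hf : ∀ γ, f γ = (P - γ • Ψ).det) :
    ∀ γ₁ γ₂ : ℝ, 0 ≤ γ₁ → γ₁ ≤ γ₂ → γ₂ ≤ 1 → f γ₂ ≤ f γ₁ :=
  det_sub_smul_antitone_general P Ψ hΨ hPΨ f hf
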